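/- arXiv:1302.5708 — 2 statements merged into one kernel-verified Lean document; each statement's English description precedes it below -/
import Mathlib

section
/- If integers n ≥ 0, k ≥ 0, and m ∈ ℤ satisfy 5n + 3 = k(k+1) + m(3m−1), then 2k + 1 is divisible by 5. -/
/-! Multiplying by 12 and completing squares turns the equation into
`3 (2k+1)² + (6m-1)² = 5 (12n + 8)`. Since `-3` is not a square modulo 5,
`3a² + b² ≡ 0 (mod 5)` forces `a ≡ 0 (mod 5)`. -/

theorem ZMod.eq_zero_of_three_mul_sq_add_sq_eq_zero {a b : ZMod 5}
    (h : 3 * a ^ 2 + b ^ 2 = 0) : a = 0 := by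
  revert a b; decide

theorem Int.five_dvd_of_five_dvd_three_mul_sq_add_sq {a b : ℤ}
    (h : 5 ∣ 3 * a ^ 2 + b ^ 2) : 5 ∣ a := by
  have h5 := (ZMod.intCast_zmod_eq_zero_iff_dvd _ 5).mpr h
  push_cast at h5
  exact (ZMod.intCast_zmod_eq_zero_iff_dvd a 5).mp
    (ZMod.eq_zero_of_three_mul_sq_add_sq_eq_zero h5)

/-- If integers `n ≥ 0`, `k ≥ 0` and `m ∈ ℤ` satisfy
`5n + 3 = k(k+1) + m(3m − 1)`, then `5 ∣ 2k + 1`. -/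
theorem five_dvd_of_pentagonal_eq (n k : ℕ) (m : ℤ)
    (h : (5 * n + 3 : ℤ) = (k : ℤ) * (k + 1) + m * (3 * m - 1)) :
    (5 : ℤ) ∣ 2 * (k : ℤ) + 1 := by
  have hsq : 3 * (2 * (k : ℤ) + 1) ^ 2 + (6 * m - 1) ^ 2 = 5 * (12 * n + 8) := by
    linear_combination -12 * h
  exact Int.five_dvd_of_five_dvd_three_mul_sq_add_sq ⟨_, hsq⟩
end

section
/- Jacobi's identity: as formal power series, ∏_{j≥1}(1−q^j)³ = ∑_{k≥0} (−1)^k (2k+1) q^{k(k+1)/2}. -/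
/-!
Let `T k = k(k+1)/2`. By induction on `n`, the coefficient of `z^m` in
`∏_{j<n} (1 + q^{j+1} z)(z + q^j)` is `[2n, m]_q q^{T(m-n)}` (finite Jacobi triple product).
For `n + 1` factors one of them is `z + 1`, so differentiating at `z = -1` gives
`(-1)^n (q;q)_{n+1} (q;q)_n = ∑_m (-1)^{m-1} m [2n+2, m]_q q^{T(m-n-1)}`.
Since `(q;q)_k [k+d, k]_q = (q^{d+1};q)_k`, multiplying by `(q;q)_{n+1}` turns each
`[2n+2, m]_q` into `1` modulo a power of `q` which, together with `q^{T(m-n-1)}`, is at least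
`q^{n+1}`. The terms `m - n - 1 = k` and `-1 - k` carry the same `q^{T k}` and combine to
`(-1)^{n+k} (2k+1) q^{T k}`; the unpaired term `k = n + 1` vanishes modulo `q^{n+1}`.
As `(q;q)_∞ ≡ (q;q)_{n+1} ≡ (q;q)_n` modulo `q^{n+1}`, this gives the coefficients of
`(q;q)_∞^3` up to `q^n`.
-/

section

open Polynomial Finset

local notation "q" => (Polynomial.X : Polynomial ℤ)

/-- `(q^{a+1}; q)_n` in q-Pochhammer notation. -/
noncomputable def qPoch (a n : ℕ) : ℤ[X] := ∏ j ∈ range n, (1 - q ^ (a + j + 1))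

theorem qPoch_zero_right (a : ℕ) : qPoch a 0 = 1 := prod_range_zero _

theorem qPoch_succ (a n : ℕ) : qPoch a (n + 1) = qPoch a n * (1 - q ^ (a + n + 1)) :=
  prod_range_succ _ _

theorem qPoch_succ' (a n : ℕ) : qPoch a (n + 1) = (1 - q ^ (a + 1)) * qPoch (a + 1) n := by
  rw [qPoch, prod_range_succ', mul_comm, qPoch]
  simp only [add_zero, add_assoc, add_comm 1]

theorem qPoch_add (a m n : ℕ) : qPoch a (m + n) = qPoch a m * qPoch (a + m) n := by
  rw [qPoch, prod_range_add, qPoch, qPoch]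
  simp only [add_assoc]

theorem X_pow_dvd_qPoch_sub_one (a n : ℕ) : q ^ (a + 1) ∣ qPoch a n - 1 := by
  induction n with
  | zero => simp [qPoch_zero_right]
  | succ n ih =>
    rw [qPoch_succ, show qPoch a n * (1 - q ^ (a + n + 1)) - 1
      = (qPoch a n - 1) * (1 - q ^ (a + n + 1)) - q ^ (a + n + 1) by ring]
    exact dvd_sub (ih.mul_right _) (pow_dvd_pow _ (by omega))

theorem X_pow_dvd_qPoch_add_sub (m n : ℕ) : q ^ (m + 1) ∣ qPoch 0 (m + n) - qPoch 0 m := by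
  rw [qPoch_add, zero_add, ← mul_sub_one]
  exact (X_pow_dvd_qPoch_sub_one m n).mul_left _

theorem qPoch_ne_zero (a n : ℕ) : qPoch a n ≠ 0 := by
  intro h
  simpa [qPoch, eval_prod] using congrArg (eval 0) h

noncomputable def qBinom : ℕ → ℕ → ℤ[X]
  | _, 0 => 1
  | 0, _ + 1 => 0
  | n + 1, k + 1 => qBinom n k + q ^ (k + 1) * qBinom n (k + 1)

@[simp] theorem qBinom_zero_right (n : ℕ) : qBinom n 0 = 1 := by cases n <;> rfl

theorem qBinom_succ_succ (n k : ℕ) :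
    qBinom (n + 1) (k + 1) = qBinom n k + q ^ (k + 1) * qBinom n (k + 1) := rfl

theorem qBinom_eq_zero_of_lt {n k : ℕ} (h : n < k) : qBinom n k = 0 := by
  induction n generalizing k with
  | zero => obtain ⟨k, rfl⟩ := Nat.exists_eq_succ_of_ne_zero (by omega : k ≠ 0); rfl
  | succ n ih =>
    obtain ⟨k, rfl⟩ := Nat.exists_eq_succ_of_ne_zero (by omega : k ≠ 0)
    rw [qBinom_succ_succ, ih (by omega), ih (by omega), mul_zero, add_zero]

@[simp] theorem qBinom_self (n : ℕ) : qBinom n n = 1 := by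
  induction n with
  | zero => rfl
  | succ n ih => rw [qBinom_succ_succ, ih, qBinom_eq_zero_of_lt (by omega), mul_zero, add_zero]

theorem qPoch_mul_qBinom_add (k d : ℕ) : qPoch 0 k * qBinom (k + d) k = qPoch d k := by
  induction k generalizing d with
  | zero => simp [qPoch_zero_right]
  | succ k ihk =>
    induction d with
    | zero => simp
    | succ d ihd =>
      rw [show k + 1 + (d + 1) = k + (d + 1) + 1 by omega, qBinom_succ_succ, mul_add,
        mul_left_comm, show k + (d + 1) = k + 1 + d by omega, ihd, qPoch_succ 0 k,
        mul_right_comm, show k + 1 + d = k + (d + 1) by omega, ihk, qPoch_succ', qPoch_succ]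
      ring

theorem qPoch_mul_qPoch_mul_qBinom (k d : ℕ) :
    qPoch 0 k * qPoch 0 d * qBinom (k + d) k = qPoch 0 (k + d) := by
  rw [mul_right_comm, qPoch_mul_qBinom_add, mul_comm, add_comm, qPoch_add, zero_add]

theorem qBinom_symm (k d : ℕ) : qBinom (k + d) k = qBinom (k + d) d := by
  have h := (qPoch_mul_qPoch_mul_qBinom k d).trans
    ((add_comm k d ▸ qPoch_mul_qPoch_mul_qBinom d k).symm)
  rw [mul_comm (qPoch 0 d)] at h
  exact mul_left_cancel₀ (mul_ne_zero (qPoch_ne_zero 0 k) (qPoch_ne_zero 0 d)) h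

theorem qBinom_succ_succ' (n k : ℕ) :
    qBinom (n + 1) (k + 1) = qBinom n (k + 1) + q ^ (n - k) * qBinom n k := by
  rcases lt_or_ge n k with h | h
  · rw [qBinom_eq_zero_of_lt (by omega), qBinom_eq_zero_of_lt (by omega),
      qBinom_eq_zero_of_lt h, mul_zero, add_zero]
  obtain ⟨d, rfl⟩ := Nat.exists_eq_add_of_le h
  rw [Nat.add_sub_cancel_left]
  cases d with
  | zero => simp [qBinom_eq_zero_of_lt]
  | succ d =>
    have h1 := qBinom_symm (k + 1) (d + 1)
    have h2 := qBinom_symm (k + 1) d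
    have h3 := qBinom_symm k (d + 1)
    rw [show k + 1 + (d + 1) = k + 1 + d + 1 by omega, qBinom_succ_succ _ d] at h1
    rw [show k + (d + 1) + 1 = k + 1 + d + 1 by omega, h1, ← h2,
      show k + 1 + d = k + (d + 1) by omega, ← h3]

theorem qBinom_add_two_add_two (n k : ℕ) :
    qBinom (n + 2) (k + 2) = q ^ (k + 2) * qBinom n (k + 2)
      + (1 + q ^ (n + 1)) * qBinom n (k + 1) + q ^ (n - k) * qBinom n k := by
  rw [qBinom_succ_succ, qBinom_succ_succ', qBinom_succ_succ']
  rcases lt_or_ge k n with h | h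
  · rw [show n - (k + 1) = n - k - 1 by omega]
    have : q ^ (k + 2) * q ^ (n - k - 1) = q ^ (n + 1) := by rw [← pow_add]; congr 1; omega
    linear_combination qBinom n (k + 1) * this
  · rw [qBinom_eq_zero_of_lt (by omega : n < k + 1), qBinom_eq_zero_of_lt (by omega : n < k + 2)]
    ring

theorem X_pow_dvd_qPoch_mul_qBinom_sub_one {n k d : ℕ} (h : min k d ≤ n) :
    q ^ (min k d + 1) ∣ qPoch 0 n * qBinom (k + d) k - 1 := by
  wlog hk : k ≤ n generalizing k d
  · rw [qBinom_symm, add_comm k d, min_comm]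
    exact this (by omega) (by omega)
  obtain ⟨r, rfl⟩ := Nat.exists_eq_add_of_le hk
  rw [qPoch_add, zero_add, mul_right_comm, qPoch_mul_qBinom_add,
    show qPoch d k * qPoch k r - 1 = (qPoch d k - 1) * qPoch k r + (qPoch k r - 1) by ring]
  exact dvd_add
    (dvd_mul_of_dvd_left ((pow_dvd_pow _ (by omega)).trans (X_pow_dvd_qPoch_sub_one d k)) _)
    ((pow_dvd_pow _ (by omega)).trans (X_pow_dvd_qPoch_sub_one k r))

def triangle (k : ℤ) : ℕ := (k * (k + 1) / 2).toNat

theorem two_mul_triangle (k : ℤ) : 2 * (triangle k : ℤ) = k * (k + 1) := by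
  have hdvd : (2 : ℤ) ∣ k * (k + 1) := (Int.even_mul_succ_self k).two_dvd
  have hnonneg : 0 ≤ k * (k + 1) := by nlinarith [sq_nonneg (2 * k + 1)]
  rw [triangle, Int.toNat_of_nonneg (Int.ediv_nonneg hnonneg (by norm_num)),
    Int.mul_ediv_cancel' hdvd]

theorem triangle_add_one (k : ℤ) : (triangle (k + 1) : ℤ) = triangle k + k + 1 := by
  have := two_mul_triangle (k + 1)
  have := two_mul_triangle k
  nlinarith

theorem triangle_neg_sub_one (k : ℤ) : triangle (-k - 1) = triangle k := by
  have := two_mul_triangle (-k - 1)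
  have := two_mul_triangle k
  zify
  nlinarith

theorem triangle_natCast (n : ℕ) : triangle n = n * (n + 1) / 2 := by
  have := two_mul_triangle n
  zify
  omega

theorem le_triangle (k : ℤ) : k ≤ triangle k := by
  have := two_mul_triangle k
  rcases le_or_gt k 0 with h | h <;> nlinarith

theorem neg_sub_one_le_triangle (k : ℤ) : -k - 1 ≤ triangle k := by
  simpa [triangle_neg_sub_one] using le_triangle (-k - 1)

local notation "z" => (Polynomial.X : Polynomial (Polynomial ℤ))

/-- `z ^ n` times the finite triple product `∏_{j<n} (1 + q^{j+1} z)(1 + q^j z⁻¹)`. -/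
noncomputable def tripleProd (n : ℕ) : ℤ[X][X] :=
  ∏ j ∈ range n, (1 + C (q ^ (j + 1)) * z) * (z + C (q ^ j))

theorem tripleProd_succ (n : ℕ) : tripleProd (n + 1) =
    tripleProd n * (C (q ^ n) + C (1 + q ^ (2 * n + 1)) * z + C (q ^ (n + 1)) * z ^ 2) := by
  rw [tripleProd, prod_range_succ, ← tripleProd]
  simp only [map_add, map_pow, map_one]
  ring

noncomputable def tripleCoeff (n m : ℕ) : ℤ[X] := qBinom (2 * n) m * q ^ triangle (m - n)

theorem tripleCoeff_succ_zero (n : ℕ) : tripleCoeff (n + 1) 0 = tripleCoeff n 0 * q ^ n := by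
  have h := triangle_add_one (-(n + 1 : ℤ))
  rw [show -(n + 1 : ℤ) + 1 = -n by ring] at h
  simp only [tripleCoeff, Nat.cast_zero, zero_sub, qBinom_zero_right, one_mul, ← pow_add]
  congr 1
  push_cast
  omega

theorem tripleCoeff_succ_one (n : ℕ) :
    tripleCoeff (n + 1) 1 = tripleCoeff n 1 * q ^ n + tripleCoeff n 0 * (1 + q ^ (2 * n + 1)) := by
  have hq : qBinom (2 * n + 2) 1 = q * qBinom (2 * n) 1 + 1 + q ^ (2 * n + 1) := by
    rw [qBinom_succ_succ (2 * n + 1) 0, qBinom_succ_succ' (2 * n) 0, qBinom_zero_right,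
      qBinom_zero_right, Nat.sub_zero]
    ring
  have hexp : q ^ triangle (1 - n) * q ^ n = q * q ^ triangle (-n) := by
    have := triangle_add_one (-n)
    rw [← pow_add, ← pow_succ']
    congr 1
    ring_nf at this ⊢
    omega
  simp only [tripleCoeff, show 2 * (n + 1) = 2 * n + 2 by ring, Nat.cast_one, Nat.cast_zero,
    show (1 : ℤ) - (n + 1 : ℕ) = -n by push_cast; ring, zero_sub, hq, qBinom_zero_right]
  linear_combination -qBinom (2 * n) 1 * hexp

theorem tripleCoeff_succ_add_two (n m : ℕ) : tripleCoeff (n + 1) (m + 2) =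
    tripleCoeff n (m + 2) * q ^ n + tripleCoeff n (m + 1) * (1 + q ^ (2 * n + 1))
      + tripleCoeff n m * q ^ (n + 1) := by
  simp only [tripleCoeff, show 2 * (n + 1) = 2 * n + 2 by ring, qBinom_add_two_add_two,
    show ((m + 2 : ℕ) : ℤ) - n = m - n + 1 + 1 by push_cast; ring,
    show ((m + 1 : ℕ) : ℤ) - n = m - n + 1 by push_cast; ring,
    show ((m + 2 : ℕ) : ℤ) - (n + 1 : ℕ) = m - n + 1 by push_cast; ring]
  have h1 := triangle_add_one (m - n)
  have h2 := triangle_add_one (m - n + 1)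
  rcases le_or_gt m (2 * n) with hm | hm
  · have e1 : q ^ triangle (m - n + 1 + 1) * q ^ n = q ^ (m + 2) * q ^ triangle (m - n + 1) := by
      rw [← pow_add, ← pow_add]; congr 1; omega
    have e2 : q ^ triangle (m - n) * q ^ (n + 1) = q ^ (2 * n - m) * q ^ triangle (m - n + 1) := by
      rw [← pow_add, ← pow_add]; congr 1; omega
    linear_combination -qBinom (2 * n) (m + 2) * e1 - qBinom (2 * n) m * e2
  · simp [qBinom_eq_zero_of_lt, hm, show 2 * n < m + 1 by omega, show 2 * n < m + 2 by omega]

theorem coeff_tripleProd (n m : ℕ) : (tripleProd n).coeff m = tripleCoeff n m := by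
  induction n generalizing m with
  | zero =>
    cases m with
    | zero => simp [tripleProd, tripleCoeff, triangle]
    | succ m => simp [tripleProd, tripleCoeff, coeff_one, qBinom]
  | succ n ih =>
    rw [tripleProd_succ]
    match m with
    | 0 =>
      simp only [mul_add, ← mul_assoc, coeff_add, coeff_mul_C, coeff_mul_X_zero,
        coeff_mul_X_pow', ih]
      simp [tripleCoeff_succ_zero]
    | 1 =>
      simp only [mul_add, ← mul_assoc, coeff_add, coeff_mul_C, coeff_mul_X, coeff_mul_X_pow', ih]
      simp only [tripleCoeff_succ_one, show ¬2 ≤ 1 by omega, if_false]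
      ring
    | m + 2 =>
      simp only [mul_add, ← mul_assoc, coeff_add, coeff_mul_C, coeff_mul_X, coeff_mul_X_pow, ih]
      rw [tripleCoeff_succ_add_two]
      ring

theorem natDegree_tripleProd_le (n : ℕ) : (tripleProd n).natDegree ≤ 2 * n :=
  natDegree_le_iff_coeff_eq_zero.2 fun m hm => by
    rw [coeff_tripleProd, tripleCoeff, qBinom_eq_zero_of_lt hm, zero_mul]

theorem tripleProd_succ_eq_X_add_one_mul (n : ℕ) :
    tripleProd (n + 1) = (z + 1) * ((∏ j ∈ range (n + 1), (1 + C (q ^ (j + 1)) * z)) *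
      ∏ j ∈ range n, (z + C (q ^ (j + 1)))) := by
  rw [tripleProd, prod_mul_distrib, prod_range_succ' (fun j => z + C (q ^ j))]
  simp only [pow_zero, map_one]
  ring

theorem eval_neg_one_derivative_tripleProd (n : ℕ) :
    eval (-1) (derivative (tripleProd (n + 1))) = (-1) ^ n * (qPoch 0 (n + 1) * qPoch 0 n) := by
  rw [tripleProd_succ_eq_X_add_one_mul, derivative_mul]
  have hneg := prod_neg (s := range n) fun j => 1 - q ^ (j + 1)
  simp only [neg_sub, card_range] at hneg
  simp [eval_prod, qPoch, ← sub_eq_add_neg, neg_add_eq_sub, hneg]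
  ring

noncomputable def jacobiPoly (n : ℕ) : ℤ[X] :=
  ∑ k ∈ range (n + 1), C ((-1) ^ k * (2 * k + 1 : ℤ)) * q ^ (k * (k + 1) / 2)

theorem sum_range_eq_jacobiPoly_sub (n : ℕ) :
    ∑ i ∈ range (2 * n + 2), C ((-1) ^ (i + n) * (i + 1 : ℤ)) * q ^ triangle (i - n)
      = jacobiPoly n - C ((-1) ^ n * (2 * n + 2 : ℤ)) * q ^ triangle (n + 1) := by
  rw [show 2 * n + 2 = n + (n + 1 + 1) by ring, sum_range_add, ← sum_range_reflect,
    sum_range_succ _ (n + 1), sum_range_succ _ n, jacobiPoly, sum_range_succ]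
  have hleft : ∀ j ∈ range n,
      C ((-1) ^ (n - 1 - j + n) * ((n - 1 - j : ℕ) + 1 : ℤ)) * q ^ triangle ((n - 1 - j : ℕ) - n)
        = C ((-1) ^ j * (2 * j + 1 : ℤ)) * q ^ (j * (j + 1) / 2)
          - C ((-1) ^ j * (n + j + 1 : ℤ)) * q ^ (j * (j + 1) / 2) := by
    intro j hj
    rw [mem_range] at hj
    rw [show ((n - 1 - j : ℕ) : ℤ) - n = -j - 1 by omega, triangle_neg_sub_one,
      triangle_natCast, show n - 1 - j + n = j + 1 + 2 * (n - 1 - j) by omega, pow_add, pow_mul,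
      ← sub_mul, ← map_sub]
    congr 2
    push_cast [Nat.cast_sub (by omega : j ≤ n - 1), Nat.cast_sub (by omega : 1 ≤ n)]
    ring
  have hright : ∀ j,
      C ((-1) ^ (n + j + n) * ((n + j : ℕ) + 1 : ℤ)) * q ^ triangle ((n + j : ℕ) - n)
        = C ((-1) ^ j * (n + j + 1 : ℤ)) * q ^ (j * (j + 1) / 2) := by
    intro j
    rw [show ((n + j : ℕ) : ℤ) - n = j by push_cast; ring, triangle_natCast,
      show n + j + n = j + 2 * n by ring, pow_add, pow_mul]
    congr 2
    push_cast
    ring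
  rw [sum_congr rfl hleft, sum_congr rfl fun j _ => hright j, hright, hright,
    show (n + 1 : ℤ) = (n + 1 : ℕ) by push_cast; ring, triangle_natCast, sum_sub_distrib]
  simp only [map_mul, map_add, map_neg, map_pow, map_one, map_natCast, map_ofNat]
  push_cast
  ring

theorem qPoch_succ_mul_qPoch_eq_sum (n : ℕ) :
    qPoch 0 (n + 1) * qPoch 0 n =
      ∑ i ∈ range (2 * n + 2), C ((-1) ^ (i + n) * (i + 1 : ℤ)) * tripleCoeff (n + 1) (i + 1) := by
  have hdeg : (derivative (tripleProd (n + 1))).natDegree < 2 * n + 2 := by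
    have := natDegree_derivative_le (tripleProd (n + 1))
    have := natDegree_tripleProd_le (n + 1)
    omega
  have h := eval_neg_one_derivative_tripleProd n
  rw [eval_eq_sum_range' hdeg] at h
  calc qPoch 0 (n + 1) * qPoch 0 n = (-1) ^ n * ((-1) ^ n * (qPoch 0 (n + 1) * qPoch 0 n)) := by
        rw [← mul_assoc, ← pow_add, ← two_mul, pow_mul, neg_one_sq, one_pow, one_mul]
    _ = _ := by
        rw [← h, mul_sum]
        refine sum_congr rfl fun i _ => ?_
        simp only [coeff_derivative, coeff_tripleProd, map_mul, map_pow, map_neg, map_one,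
          map_add, map_natCast]
        ring

theorem X_pow_dvd_qPoch_mul_tripleCoeff_sub {n m : ℕ} (hm : m ≤ 2 * n + 2) :
    q ^ (n + 1) ∣ qPoch 0 (n + 1) * tripleCoeff (n + 1) m - q ^ triangle (m - (n + 1 : ℕ)) := by
  obtain ⟨d, hd⟩ := Nat.exists_eq_add_of_le hm
  rw [tripleCoeff, show 2 * (n + 1) = m + d by omega, ← mul_assoc, ← sub_one_mul]
  have hbound : n + 1 ≤ min m d + 1 + triangle (m - (n + 1 : ℕ)) := by
    have := le_triangle (m - (n + 1 : ℕ))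
    have := neg_sub_one_le_triangle (m - (n + 1 : ℕ))
    omega
  have hdvd : q ^ (n + 1) ∣ q ^ (min m d + 1) * q ^ triangle (m - (n + 1 : ℕ)) := by
    rw [← pow_add]
    exact pow_dvd_pow _ hbound
  exact hdvd.trans (mul_dvd_mul_right (X_pow_dvd_qPoch_mul_qBinom_sub_one (by omega)) _)

theorem X_pow_dvd_qPoch_pow_three_sub_jacobiPoly (n : ℕ) :
    q ^ (n + 1) ∣ qPoch 0 (n + 1) ^ 3 - jacobiPoly n := by
  have hcube :
      q ^ (n + 1) ∣ qPoch 0 (n + 1) ^ 3 - qPoch 0 (n + 1) * (qPoch 0 (n + 1) * qPoch 0 n) := by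
    rw [show qPoch 0 (n + 1) ^ 3 - qPoch 0 (n + 1) * (qPoch 0 (n + 1) * qPoch 0 n)
      = qPoch 0 (n + 1) ^ 2 * (qPoch 0 (n + 1) - qPoch 0 n) by ring]
    exact (X_pow_dvd_qPoch_add_sub n 1).mul_left _
  have hsum : q ^ (n + 1) ∣ qPoch 0 (n + 1) * (qPoch 0 (n + 1) * qPoch 0 n) -
      ∑ i ∈ range (2 * n + 2), C ((-1) ^ (i + n) * (i + 1 : ℤ)) * q ^ triangle (i - n) := by
    rw [qPoch_succ_mul_qPoch_eq_sum, mul_sum, ← sum_sub_distrib]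
    refine dvd_sum fun i hi => ?_
    have := X_pow_dvd_qPoch_mul_tripleCoeff_sub (n := n) (m := i + 1)
      (by rw [mem_range] at hi; omega)
    rw [show ((i + 1 : ℕ) : ℤ) - (n + 1 : ℕ) = i - n by push_cast; ring] at this
    rw [mul_left_comm, ← mul_sub]
    exact this.mul_left _
  have htail : q ^ (n + 1) ∣ C ((-1) ^ n * (2 * n + 2 : ℤ)) * q ^ triangle (n + 1) := by
    refine (pow_dvd_pow _ ?_).mul_left _
    have := le_triangle (n + 1)
    omega
  rw [sum_range_eq_jacobiPoly_sub] at hsum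
  convert dvd_sub (dvd_add hcube hsum) htail using 1
  ring

theorem coeff_qPoch_pow_three (N : ℕ) : (qPoch 0 (N + 1) ^ 3).coeff N =
    ∑ k ∈ range (N + 1), if k * (k + 1) / 2 = N then (-1 : ℤ) ^ k * (2 * k + 1) else 0 := by
  have h := X_pow_dvd_iff.1 (X_pow_dvd_qPoch_pow_three_sub_jacobiPoly N) N (by omega)
  rw [coeff_sub, sub_eq_zero] at h
  simp only [h, jacobiPoly, finsetSum_coeff, coeff_C_mul_X_pow, eq_comm]

end

open PowerSeries Finset

/-- `(q^a; q^a)_∞ = ∏_{j ≥ 1} (1 - q^{a j})` as a formal power series over ℤ: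
the coefficient of `q^N` is computed from the (sufficient) finite partial product. -/
noncomputable def E (a : ℕ) : PowerSeries ℤ :=
  PowerSeries.mk fun N =>
    (∏ j ∈ Finset.range (N + 1), (1 - Polynomial.X ^ (a * (j + 1)) : Polynomial ℤ)).coeff N

/-- `(q; q²)_∞ = ∏_{j ≥ 0} (1 - q^{2j+1})`. -/
noncomputable def Eodd : PowerSeries ℤ :=
  PowerSeries.mk fun N =>
    (∏ j ∈ Finset.range (N + 1), (1 - Polynomial.X ^ (2 * j + 1) : Polynomial ℤ)).coeff N

/-- `(-q; q²)_∞ = ∏_{j ≥ 0} (1 + q^{2j+1})`. -/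
noncomputable def EoddNeg : PowerSeries ℤ :=
  PowerSeries.mk fun N =>
    (∏ j ∈ Finset.range (N + 1), (1 + Polynomial.X ^ (2 * j + 1) : Polynomial ℤ)).coeff N

/-- Ramanujan's theta function `φ(q^a) = ∑_{m ∈ ℤ} q^{a m²}`. -/
noncomputable def phi (a : ℕ) : PowerSeries ℤ :=
  PowerSeries.mk fun N => (Nat.card {m : ℤ // a * m ^ 2 = N} : ℤ)

/-- Ramanujan's theta function `ψ(q^a) = ∑_{k ≥ 0} q^{a k(k+1)/2}`. -/
noncomputable def psi (a : ℕ) : PowerSeries ℤ :=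
  PowerSeries.mk fun N => (Nat.card {k : ℕ // a * (k * (k + 1) / 2) = N} : ℤ)

theorem X_pow_dvd_E_one_sub_qPoch (N : ℕ) :
    (X : ℤ⟦X⟧) ^ (N + 1) ∣ E 1 - (qPoch 0 (N + 1) : ℤ⟦X⟧) := by
  refine PowerSeries.X_pow_dvd_iff.2 fun d hd => ?_
  have h := Polynomial.X_pow_dvd_iff.1 (X_pow_dvd_qPoch_add_sub (d + 1) (N - d)) d (by omega)
  rw [show d + 1 + (N - d) = N + 1 by omega, Polynomial.coeff_sub, sub_eq_zero] at h
  rw [map_sub, Polynomial.coeff_coe, h, E, coeff_mk, sub_eq_zero]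
  simp only [qPoch, zero_add, one_mul]

theorem coeff_E_one_pow (N r : ℕ) : coeff N (E 1 ^ r) = (qPoch 0 (N + 1) ^ r).coeff N := by
  have h := PowerSeries.X_pow_dvd_iff.1 ((X_pow_dvd_E_one_sub_qPoch N).trans
    (sub_dvd_pow_sub_pow _ _ r)) N (by omega)
  rwa [map_sub, sub_eq_zero, ← Polynomial.coe_pow, Polynomial.coeff_coe] at h

/-- Jacobi's identity: `(q;q)_∞³ = ∑_{k ≥ 0} (−1)^k (2k+1) q^{k(k+1)/2}`. -/
theorem jacobi_identity :
    E 1 ^ 3 =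
      PowerSeries.mk fun N =>
        ∑ k ∈ Finset.range (N + 1),
          if k * (k + 1) / 2 = N then (-1 : ℤ) ^ k * (2 * k + 1) else 0 := by
  ext N
  rw [coeff_mk, coeff_E_one_pow, coeff_qPoch_pow_three]
end
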